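/- arXiv:math/0508388 — 2 statements merged into one kernel-verified Lean document; each statement's English description precedes it below -/
import Mathlib

section
/- Let V be a finite-dimensional real vector space, V₀ ⊆ V a linear subspace of codimension d, and W an m-admissible linear subspace of the space of symmetric bilinear forms on V with m > d. Then the restriction of W to V₀ is (m−d)-admissible; that is, for every w ∈ W whose restriction to V₀ is nonzero, the restriction of w to V₀ is positive definite on some subspace of V₀ of dimension at least m − d and negative definite on some subspace of V₀ of dimension at least m − d. -/
open Module

/-- `W` is `m`-admissible: every nonzero form in `W` is positive definite on some subspace of
dimension at least `m` and negative definite on some subspace of dimension at least `m`. -/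
def IsAdmissible {V : Type*} [AddCommGroup V] [Module ℝ V]
    (W : Submodule ℝ (V →ₗ[ℝ] V →ₗ[ℝ] ℝ)) (m : ℤ) : Prop :=
  ∀ w ∈ W, w ≠ 0 →
    (∃ P : Submodule ℝ V, m ≤ (finrank ℝ P : ℤ) ∧ ∀ v ∈ P, v ≠ 0 → 0 < w v v) ∧
    (∃ Q : Submodule ℝ V, m ≤ (finrank ℝ Q : ℤ) ∧ ∀ v ∈ Q, v ≠ 0 → w v v < 0)

theorem restriction_admissible
    {V : Type*} [AddCommGroup V] [Module ℝ V] [FiniteDimensional ℝ V]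
    (V₀ : Submodule ℝ V) (d : ℕ) (hcodim : finrank ℝ (V ⧸ V₀) = d)
    (m : ℕ) (hmd : d < m)
    (W : Submodule ℝ (V →ₗ[ℝ] V →ₗ[ℝ] ℝ))
    (hsymm : ∀ w ∈ W, ∀ u v : V, w u v = w v u)
    (hadm : IsAdmissible W (m : ℤ)) :
    ∀ w ∈ W, (∃ u ∈ V₀, ∃ v ∈ V₀, w u v ≠ 0) →
      (∃ P : Submodule ℝ V, P ≤ V₀ ∧ m - d ≤ finrank ℝ P ∧ ∀ v ∈ P, v ≠ 0 → 0 < w v v) ∧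
      (∃ Q : Submodule ℝ V, Q ≤ V₀ ∧ m - d ≤ finrank ℝ Q ∧ ∀ v ∈ Q, v ≠ 0 → w v v < 0) := by
  intro w hw hne
  have hwne : w ≠ 0 := by
    rintro rfl
    obtain ⟨u, _, v, _, h⟩ := hne
    simp at h
  obtain ⟨⟨P, hPm, hP⟩, ⟨Q, hQm, hQ⟩⟩ := hadm w hw hwne
  have hdim : finrank ℝ V₀ + d = finrank ℝ V := by
    rw [← hcodim, add_comm]
    exact Submodule.finrank_quotient_add_finrank V₀
  have key : ∀ R : Submodule ℝ V, (m : ℤ) ≤ (finrank ℝ R : ℤ) →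
      m - d ≤ finrank ℝ (R ⊓ V₀ : Submodule ℝ V) := by
    intro R hR
    have h1 : finrank ℝ (R ⊔ V₀ : Submodule ℝ V) + finrank ℝ (R ⊓ V₀ : Submodule ℝ V)
        = finrank ℝ R + finrank ℝ V₀ := Submodule.finrank_sup_add_finrank_inf_eq R V₀
    have h2 : finrank ℝ (R ⊔ V₀ : Submodule ℝ V) ≤ finrank ℝ V :=
      Submodule.finrank_le _
    omega
  refine ⟨⟨P ⊓ V₀, inf_le_right, key P hPm, fun v hv hv0 => hP v hv.1 hv0⟩,
          ⟨Q ⊓ V₀, inf_le_right, key Q hQm, fun v hv hv0 => hQ v hv.1 hv0⟩⟩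
end

section
/- Let V be a finite-dimensional real vector space, W a finite-dimensional linear subspace of the space of symmetric bilinear forms on V, and v₀ ∈ V. Then v₀ is not a null vector of any nonzero w ∈ W if and only if the linear map V → W* sending u to the functional w ↦ w(u, v₀) is surjective. (This is the surjectivity of the derivative of the map γ(v) = (w ↦ w(v,v)) at points of Y_W^ns, which shows that Z_n is a manifold.) -/
/-!
By symmetry of the forms, `u ↦ (w ↦ w u v₀)` is the flip of the evaluation map
`E : W → V*, w ↦ w v₀`. As `W` is finite-dimensional, the flip of `E` is surjective iff `E` is
injective (a linear map is surjective iff its dual map is injective), and the kernel of `E`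
consists exactly of the forms having `v₀` as a null vector.
-/

theorem Submodule.injective_applyₗ_comp_subtype_iff {R M N : Type*} [CommRing R]
    [AddCommGroup M] [Module R M] [AddCommGroup N] [Module R N]
    (W : Submodule R (M →ₗ[R] N)) (v : M) :
    Function.Injective (LinearMap.applyₗ v ∘ₗ W.subtype) ↔ ∀ w ∈ W, w ≠ 0 → w v ≠ 0 := by
  rw [injective_iff_map_eq_zero]
  constructor
  · intro h w hw hw0 hwv
    exact hw0 (congrArg Subtype.val (h ⟨w, hw⟩ hwv))
  · intro h w hwv
    by_contra hw0
    exact h w w.2 (by simpa using hw0) hwv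

theorem not_null_iff_dual_evaluation_surjective
    {V : Type*} [AddCommGroup V] [Module ℝ V] [FiniteDimensional ℝ V]
    (W : Submodule ℝ (V →ₗ[ℝ] V →ₗ[ℝ] ℝ))
    (hsymm : ∀ w ∈ W, ∀ u v : V, w u v = w v u)
    (v₀ : V) :
    (∀ w ∈ W, w ≠ 0 → ∃ u : V, w v₀ u ≠ 0) ↔
      Function.Surjective (fun u : V =>
        ((LinearMap.applyₗ v₀) ∘ₗ (LinearMap.applyₗ u) ∘ₗ W.subtype : Module.Dual ℝ W)) := by
  -- `flip_surjective_iff₁` needs the additive group structure of `W`, which elaboration does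
  -- not infer here.
  let _ : AddCommGroup W := @Submodule.addCommGroup ℝ (V →ₗ[ℝ] V →ₗ[ℝ] ℝ) _ _ _ W
  have hflip : (fun u : V =>
      ((LinearMap.applyₗ v₀) ∘ₗ (LinearMap.applyₗ u) ∘ₗ W.subtype : Module.Dual ℝ W)) =
      (LinearMap.applyₗ v₀ ∘ₗ W.subtype).flip :=
    funext fun u => LinearMap.ext fun w => hsymm w w.2 u v₀
  rw [hflip, LinearMap.flip_surjective_iff₁, Submodule.injective_applyₗ_comp_subtype_iff]
  simp only [ne_eq, LinearMap.ext_iff, LinearMap.zero_apply, not_forall]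
end
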